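/- For λ, μ > 0, (1/(4π)) ∫_{ℝ²} sinc(px/2) e^{-(λx² + μp²)/4} dx dp = arcsinh(1/√(λμ)), where sinc(a) = sin(a)/a for a ≠ 0 and sinc(0) = 1, and arcsinh(y) = log(y + √(y²+1)). -/

import Mathlib

/-! Writing `sinc a = ∫₀¹ cos (a t) dt` and applying Fubini, the `p`-integral becomes the Fourier
transform of a Gaussian and the `x`-integral a plain Gaussian integral; what is left is
`∫₀¹ 4π / √(λμ + t²) dt = 4π arsinh (1 / √(λμ))`. -/

open Real MeasureTheory

noncomputable def sinc (a : ℝ) : ℝ := if a = 0 then 1 else Real.sin a / a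

theorem sinc_eq_intervalIntegral_cos (a : ℝ) :
    _root_.sinc a = ∫ t in (0 : ℝ)..1, cos (a * t) := by
  rcases eq_or_ne a 0 with rfl | ha
  · simp [_root_.sinc]
  · have hderiv (t : ℝ) : HasDerivAt (fun u ↦ sin (a * u) / a) (cos (a * t)) t := by
      simpa [ha] using (((hasDerivAt_id t).const_mul a).sin).div_const a
    rw [intervalIntegral.integral_deriv_eq_sub' _ (funext fun t ↦ (hderiv t).deriv)
      (fun t _ ↦ (hderiv t).differentiableAt) (by fun_prop)]
    simp [_root_.sinc, ha]

theorem integral_cos_mul_mul_exp_neg_mul_sq {b : ℝ} (hb : 0 < b) (c : ℝ) :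
    ∫ x : ℝ, cos (c * x) * exp (-b * x ^ 2) = √(π / b) * exp (-c ^ 2 / (4 * b)) := by
  have hb' : 0 < (b : ℂ).re := by simpa using hb
  have hint :
      Integrable fun x : ℝ ↦ Complex.exp (Complex.I * c * x) * Complex.exp (-b * x ^ 2) := by
    simpa [← Complex.exp_add, add_comm] using integrable_cexp_quadratic hb' (Complex.I * c) 0
  have hre (x : ℝ) : (Complex.exp (Complex.I * c * x) * Complex.exp (-b * x ^ 2)).re
      = cos (c * x) * exp (-b * x ^ 2) := by
    rw [show Complex.I * c * x = ((c * x : ℝ) : ℂ) * Complex.I by push_cast; ring,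
      show -(b : ℂ) * x ^ 2 = ((-b * x ^ 2 : ℝ) : ℂ) by push_cast; ring, ← Complex.ofReal_exp,
      Complex.re_mul_ofReal, Complex.exp_ofReal_mul_I_re]
  have hsqrt : ((π : ℂ) / b) ^ (1 / 2 : ℂ) = (√(π / b) : ℝ) := by
    rw [sqrt_eq_rpow, Complex.ofReal_cpow (by positivity)]
    push_cast; ring_nf
  calc ∫ x : ℝ, cos (c * x) * exp (-b * x ^ 2)
      = (∫ x : ℝ, Complex.exp (Complex.I * c * x) * Complex.exp (-b * x ^ 2)).re := by
        simp_rw [← hre]; exact integral_re hint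
    _ = √(π / b) * exp (-c ^ 2 / (4 * b)) := by
        rw [fourierIntegral_gaussian hb', hsqrt, ← Complex.ofReal_pow, ← Complex.ofReal_neg]
        norm_cast

theorem integral_inv_sqrt_add_sq {c : ℝ} (hc : 0 < c) (a b : ℝ) :
    ∫ t in a..b, (√(c + t ^ 2))⁻¹ = arsinh (b / √c) - arsinh (a / √c) := by
  have hderiv (t : ℝ) : HasDerivAt (fun u ↦ arsinh (u / √c)) (√(c + t ^ 2))⁻¹ t := by
    convert ((hasDerivAt_id' t).div_const √c).arsinh using 1
    have : 0 < √c := sqrt_pos.2 hc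
    rw [smul_eq_mul, div_pow, sq_sqrt hc.le, one_add_div hc.ne', sqrt_div' _ hc.le, inv_div]
    field_simp
  exact intervalIntegral.integral_eq_sub_of_hasDerivAt (fun t _ ↦ hderiv t)
    (ContinuousOn.intervalIntegrable <|
      (by fun_prop : Continuous fun t ↦ √(c + t ^ 2)).continuousOn.inv₀ fun t _ ↦ by positivity)

theorem integral_intervalIntegral_comm {F : ℝ → ℝ → ℝ} (hF : Continuous (Function.uncurry F))
    {g : ℝ → ℝ} (hg : Integrable g) (hFg : ∀ x t, |F x t| ≤ g x) {a b : ℝ} (hab : a ≤ b) :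
    ∫ x, ∫ t in a..b, F x t = ∫ t in a..b, ∫ x, F x t := by
  simp only [intervalIntegral.integral_of_le hab]
  refine integral_integral_swap ?_
  refine (hg.mul_prod (integrable_const 1)).mono' hF.aestronglyMeasurable
    (Filter.Eventually.of_forall fun z ↦ ?_)
  simpa [Function.uncurry] using hFg z.1 z.2

theorem integral_sinc_mul_mul_exp_neg_mul_sq {b : ℝ} (hb : 0 < b) (c : ℝ) :
    ∫ p, _root_.sinc (c * p) * exp (-b * p ^ 2)
      = ∫ t in (0 : ℝ)..1, √(π / b) * exp (-(c * t) ^ 2 / (4 * b)) := by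
  calc ∫ p, _root_.sinc (c * p) * exp (-b * p ^ 2)
      = ∫ p, ∫ t in (0 : ℝ)..1, cos (c * t * p) * exp (-b * p ^ 2) := by
        simp_rw [sinc_eq_intervalIntegral_cos, ← intervalIntegral.integral_mul_const,
          mul_right_comm c]
    _ = ∫ t in (0 : ℝ)..1, ∫ p, cos (c * t * p) * exp (-b * p ^ 2) := by
        refine integral_intervalIntegral_comm (by fun_prop) (integrable_exp_neg_mul_sq hb)
          (fun p t ↦ ?_) zero_le_one
        rw [abs_mul, abs_exp]
        exact mul_le_of_le_one_left (exp_pos _).le (abs_cos_le_one _)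
    _ = ∫ t in (0 : ℝ)..1, √(π / b) * exp (-(c * t) ^ 2 / (4 * b)) := by
        simp_rw [integral_cos_mul_mul_exp_neg_mul_sq hb]

theorem integral_sinc_mul_exp_neg_quadratic (l : ℝ) {m : ℝ} (hm : 0 < m) (x : ℝ) :
    ∫ p, _root_.sinc (p * x / 2) * exp (-(l * x ^ 2 + m * p ^ 2) / 4)
      = ∫ t in (0 : ℝ)..1, √(4 * π / m) * exp (-(l / 4 + t ^ 2 / (4 * m)) * x ^ 2) := by
  calc ∫ p, _root_.sinc (p * x / 2) * exp (-(l * x ^ 2 + m * p ^ 2) / 4)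
      = exp (-(l / 4) * x ^ 2) * ∫ p, _root_.sinc (x / 2 * p) * exp (-(m / 4) * p ^ 2) := by
        rw [← integral_const_mul]
        congr 1 with p
        rw [mul_left_comm, ← exp_add]
        ring_nf
    _ = ∫ t in (0 : ℝ)..1, √(4 * π / m) * exp (-(l / 4 + t ^ 2 / (4 * m)) * x ^ 2) := by
        rw [integral_sinc_mul_mul_exp_neg_mul_sq (by positivity),
          ← intervalIntegral.integral_const_mul]
        congr 1 with t
        rw [mul_left_comm, ← exp_add, show π / (m / 4) = 4 * π / m by ring]
        congr 2
        field_simp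
        ring

theorem gaussian_sinc_integral (l m : ℝ) (hl : 0 < l) (hm : 0 < m) :
    (1 / (4 * Real.pi)) *
        ∫ x : ℝ, ∫ p : ℝ, _root_.sinc (p * x / 2) * Real.exp (-(l * x ^ 2 + m * p ^ 2) / 4) =
      Real.arsinh (1 / Real.sqrt (l * m)) := by
  set G : ℝ → ℝ → ℝ := fun x t ↦ √(4 * π / m) * exp (-(l / 4 + t ^ 2 / (4 * m)) * x ^ 2)
  have hG (x t : ℝ) : |G x t| ≤ √(4 * π / m) * exp (-(l / 4) * x ^ 2) := by
    rw [abs_of_nonneg (by positivity)]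
    simp only [G]
    gcongr
    exact le_add_of_nonneg_right (by positivity)
  have hx (t : ℝ) : ∫ x, G x t = 4 * π * (√(l * m + t ^ 2))⁻¹ := by
    rw [integral_const_mul, integral_gaussian, ← sqrt_mul (by positivity),
      show 4 * π / m * (π / (l / 4 + t ^ 2 / (4 * m))) = (4 * π) ^ 2 / (l * m + t ^ 2) by
        field_simp,
      sqrt_div' _ (by positivity), sqrt_sq (by positivity), div_eq_mul_inv]
  rw [integral_congr_ae (ae_of_all _ (integral_sinc_mul_exp_neg_quadratic l hm)),
    integral_intervalIntegral_comm (by fun_prop)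
      ((integrable_exp_neg_mul_sq (by positivity)).const_mul _) hG zero_le_one]
  simp_rw [hx]
  rw [intervalIntegral.integral_const_mul, integral_inv_sqrt_add_sq (by positivity)]
  field_simp
  simp
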